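/- Let X be a binomially distributed random variable with parameters m and p, where 1 ≤ mp ≤ m ≤ n. Then E[η(X)] ≤ 3·η(mp). -/

import Mathlib

open scoped BigOperators Classical
open MeasureTheory

noncomputable section

/-- A finite matroid on ground set `E`, given by its rank function. -/
structure FinMatroid (α : Type*) [DecidableEq α] where
  E : Finset α
  r : Finset α → ℕ
  rank_le_card : ∀ A : Finset α, r A ≤ A.card
  rank_mono : ∀ ⦃A B : Finset α⦄, A ⊆ B → r A ≤ r B
  rank_submod : ∀ A B : Finset α, r (A ∪ B) + r (A ∩ B) ≤ r A + r B

variable {α : Type*} [DecidableEq α]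

/-- Independence in terms of the rank function. -/
def FinMatroid.Indep (M : FinMatroid α) (I : Finset α) : Prop :=
  I ⊆ M.E ∧ M.r I = I.card

/-- The span (closure) of a set. -/
def FinMatroid.span (M : FinMatroid α) (A : Finset α) : Finset α :=
  M.E.filter fun e => M.r (insert e A) = M.r A

/-- `M.D S lam` : the unique inclusion-wise maximal maximizer of `|U| - lam * r U`
over `U ⊆ S`, realized as the union of all maximizers. -/
def FinMatroid.D (M : FinMatroid α) (S : Finset α) (lam : ℝ) : Finset α :=
  (S.powerset.filter fun U =>
      ∀ V ∈ S.powerset, (V.card : ℝ) - lam * M.r V ≤ (U.card : ℝ) - lam * M.r U).sup id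

/-- The rank-density curve of `M`. -/
def FinMatroid.rdCurve (M : FinMatroid α) : ℝ → ℝ := fun t =>
  sSup {lam : ℝ | 0 ≤ lam ∧ t ≤ (M.r (M.D M.E lam) : ℝ)}

/-- Restriction of a matroid to a subset. -/
def FinMatroid.restrict (M : FinMatroid α) (T : Finset α) : FinMatroid α where
  E := M.E ∩ T
  r := fun A => M.r (A ∩ T)
  rank_le_card := fun A =>
    (M.rank_le_card _).trans (Finset.card_le_card Finset.inter_subset_left)
  rank_mono := fun A B hAB =>
    M.rank_mono (Finset.inter_subset_inter hAB (Finset.Subset.refl T))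
  rank_submod := fun A B => by
    have h1 : (A ∪ B) ∩ T = (A ∩ T) ∪ (B ∩ T) := by ext x; simp only [Finset.mem_inter, Finset.mem_union]; tauto
    have h2 : (A ∩ B) ∩ T = (A ∩ T) ∩ (B ∩ T) := by ext x; simp only [Finset.mem_inter]; tauto
    rw [h1, h2]; exact M.rank_submod _ _

/-- `eta n w a` : the expected maximum weight among a uniformly random subset of
`⌊a⌋` of the `n` weights `w`, with value `0` for `a < 1`. -/
def eta (n : ℕ) (w : Fin n → ℝ) (a : ℝ) : ℝ :=
  if a < 1 then 0 else
    (∑ R ∈ Finset.powersetCard ⌊a⌋.toNat (Finset.univ : Finset (Fin n)),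
        R.fold max 0 w) /
      ((Finset.powersetCard ⌊a⌋.toNat (Finset.univ : Finset (Fin n))).card : ℝ)

/-- `FF n w ρ = ∫_0^∞ η(ρ(t)) dt`. -/
def FF (n : ℕ) (w : Fin n → ℝ) (ρ : ℝ → ℝ) : ℝ :=
  ∫ t in Set.Ioi (0 : ℝ), eta n w (ρ t)

/-- The `(a, b)`-downshift of a curve `ρ`. -/
def downshift (ρ : ℝ → ℝ) (a b : ℝ) : ℝ → ℝ := fun t =>
  let φ : ℝ := if t ≤ 1 then ρ a / b else ρ (a * t) / b
  if 0 < φ ∧ φ < 1 then 1 else φ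

/-- `ρt` is an `(a,b)`-approximation of `ρ`: it is non-increasing and nonnegative on
`(0,∞)` and squeezed between the `(a,b)`-downshift of `ρ` and `ρ` on `(0,∞)`. -/
def IsApprox (a b : ℝ) (ρ ρt : ℝ → ℝ) : Prop :=
  AntitoneOn ρt (Set.Ioi 0) ∧ (∀ t, 0 < t → 0 ≤ ρt t) ∧
    ∀ t, 0 < t → downshift ρ a b t ≤ ρt t ∧ ρt t ≤ ρ t

/-- Probability of event `P` for a random subset `S ⊆ N` including each element
independently with probability `1/2`. -/
def prHalf (N : Finset α) (P : Finset α → Prop) : ℝ :=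
  ((N.powerset.filter P).card : ℝ) / 2 ^ N.card



/-!
Let `η_j` be the average, over the `j`-subsets `R` of the ground set, of `max_{i ∈ R} w_i`.
Averaging over the `j`-subsets of a uniformly random `k`-subset is the same as averaging over all
`j`-subsets. This makes `η` monotone, and, splitting a random `(a + b)`-set into a random `a`-set
and its complement, subadditive: `η_{a+b} ≤ η_a + η_b`. Hence `η_j ≤ (j / k + 1) η_k`, and for
`k = ⌊mp⌋` taking expectations gives `E η_X ≤ (mp / k + 1) η_k ≤ 3 η_k`, as `mp < k + 1 ≤ 2k`.
-/

open Finset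

section Tower

variable {ι K : Type*} [Semifield K] [CharZero K]

theorem expect_powersetCard_expect_powersetCard {s : Finset ι} {j k : ℕ} (hjk : j ≤ k)
    (hks : k ≤ #s) (f : Finset ι → K) :
    𝔼 T ∈ s.powersetCard k, 𝔼 R ∈ T.powersetCard j, f R = 𝔼 R ∈ s.powersetCard j, f R := by
  have hswap : ∑ T ∈ s.powersetCard k, ∑ R ∈ T.powersetCard j, f R
      = ∑ R ∈ s.powersetCard j, ∑ _T ∈ {T ∈ s.powersetCard k | R ⊆ T}, f R :=
    sum_comm' fun T R ↦ by
      simp only [mem_powersetCard, mem_filter]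
      exact ⟨fun ⟨hT, hRT, hR⟩ ↦ ⟨⟨hT, hRT⟩, hRT.trans hT.1, hR⟩,
        fun ⟨⟨hT, hRT⟩, _, hR⟩ ↦ ⟨hT, hRT, hR⟩⟩
  have hcount : ∀ R ∈ s.powersetCard j,
      #{T ∈ s.powersetCard k | R ⊆ T} = (#s - j).choose (k - j) := fun R hR ↦ by
    obtain ⟨hRs, rfl⟩ := mem_powersetCard.mp hR
    exact card_filter_powersetCard_subset R s k hRs hjk
  have hchoose : ((#s).choose k * k.choose j : K) = (#s).choose j * (#s - j).choose (k - j) := by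
    exact_mod_cast Nat.choose_mul hjk
  have hpos : ((#s - j).choose (k - j) : K) ≠ 0 := by
    exact_mod_cast (Nat.choose_pos (Nat.sub_le_sub_right hks j)).ne'
  have hinner : ∀ T ∈ s.powersetCard k, 𝔼 R ∈ T.powersetCard j, f R
      = (∑ R ∈ T.powersetCard j, f R) / k.choose j := fun T hT ↦ by
    rw [expect_eq_sum_div_card, card_powersetCard, (mem_powersetCard.mp hT).2]
  rw [expect_congr rfl hinner, expect_eq_sum_div_card, expect_eq_sum_div_card, ← sum_div, hswap,
    sum_congr rfl fun R hR ↦ by rw [sum_const, hcount R hR], card_powersetCard,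
    card_powersetCard, ← smul_sum, nsmul_eq_mul, div_div, mul_comm (k.choose j : K), hchoose,
    mul_comm ((#s).choose j : K), mul_div_mul_left _ _ hpos]

end Tower

section Binomial

variable {R : Type*} [CommRing R]

theorem sum_choose_mul_pow_mul_pow (m : ℕ) (p : R) :
    ∑ j ∈ range (m + 1), (m.choose j : R) * p ^ j * (1 - p) ^ (m - j) = 1 := by
  simpa [bernsteinPolynomial, Polynomial.eval_finsetSum] using
    congrArg (Polynomial.eval p) (bernsteinPolynomial.sum R m)

theorem sum_mul_choose_mul_pow_mul_pow (m : ℕ) (p : R) :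
    ∑ j ∈ range (m + 1), (j : R) * ((m.choose j : R) * p ^ j * (1 - p) ^ (m - j)) = m * p := by
  simpa [bernsteinPolynomial, Polynomial.eval_finsetSum] using
    congrArg (Polynomial.eval p) (bernsteinPolynomial.sum_smul R m)

end Binomial

section ExpectMax

variable {ι : Type*}

theorem expect_powersetCard_sdiff {M : Type*} [AddCommMonoid M] [Module ℚ≥0 M] [DecidableEq ι]
    {T : Finset ι} {a b : ℕ} (hT : #T = a + b) (f : Finset ι → M) :
    𝔼 R ∈ T.powersetCard a, f (T \ R) = 𝔼 Q ∈ T.powersetCard b, f Q :=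
  expect_nbij' (T \ ·) (T \ ·)
    (fun R hR ↦ by
      obtain ⟨hRT, hR⟩ := mem_powersetCard.1 hR
      exact mem_powersetCard.2 ⟨sdiff_subset, by rw [card_sdiff_of_subset hRT]; omega⟩)
    (fun Q hQ ↦ by
      obtain ⟨hQT, hQ⟩ := mem_powersetCard.1 hQ
      exact mem_powersetCard.2 ⟨sdiff_subset, by rw [card_sdiff_of_subset hQT]; omega⟩)
    (fun R hR ↦ Finset.sdiff_sdiff_eq_self (mem_powersetCard.1 hR).1)
    (fun Q hQ ↦ Finset.sdiff_sdiff_eq_self (mem_powersetCard.1 hQ).1)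
    fun _ _ ↦ rfl

variable (w : ι → ℝ)

theorem fold_max_zero_nonneg (R : Finset ι) : 0 ≤ R.fold max 0 w :=
  (le_fold_max _).2 (Or.inl le_rfl)

theorem fold_max_zero_mono {R T : Finset ι} (h : R ⊆ T) : R.fold max 0 w ≤ T.fold max 0 w :=
  (fold_max_le _).2 ⟨fold_max_zero_nonneg w T,
    fun x hx ↦ (le_fold_max _).2 (Or.inr ⟨x, h hx, le_rfl⟩)⟩

theorem fold_max_zero_union_le [DecidableEq ι] (R Q : Finset ι) :
    (R ∪ Q).fold max 0 w ≤ R.fold max 0 w + Q.fold max 0 w := by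
  refine (fold_max_le _).2 ⟨add_nonneg (fold_max_zero_nonneg w R) (fold_max_zero_nonneg w Q),
    fun x hx ↦ ?_⟩
  rcases mem_union.1 hx with hxR | hxQ
  · exact le_add_of_le_of_nonneg ((le_fold_max _).2 (Or.inr ⟨x, hxR, le_rfl⟩))
      (fold_max_zero_nonneg w Q)
  · exact le_add_of_nonneg_of_le (fold_max_zero_nonneg w R)
      ((le_fold_max _).2 (Or.inr ⟨x, hxQ, le_rfl⟩))

def expectMax (s : Finset ι) (j : ℕ) : ℝ :=
  𝔼 R ∈ s.powersetCard j, R.fold max 0 w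

variable {w} {s : Finset ι}

theorem expectMax_nonneg (j : ℕ) : 0 ≤ expectMax w s j :=
  expect_nonneg fun R _ ↦ fold_max_zero_nonneg w R

theorem expectMax_mono {j k : ℕ} (hjk : j ≤ k) (hks : k ≤ #s) :
    expectMax w s j ≤ expectMax w s k := by
  rw [expectMax, ← expect_powersetCard_expect_powersetCard hjk hks]
  refine expect_le_expect fun T hT ↦ ?_
  obtain ⟨-, rfl⟩ := mem_powersetCard.1 hT
  exact expect_le (powersetCard_nonempty.2 hjk) fun R hR ↦
    fold_max_zero_mono w (mem_powersetCard.1 hR).1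

theorem expectMax_add_le {a b : ℕ} (hab : a + b ≤ #s) :
    expectMax w s (a + b) ≤ expectMax w s a + expectMax w s b := by
  classical
  rw [expectMax, expectMax, expectMax,
    ← expect_powersetCard_expect_powersetCard (Nat.le_add_right a b) hab,
    ← expect_powersetCard_expect_powersetCard (Nat.le_add_left b a) hab, ← expect_add_distrib]
  refine expect_le_expect fun T hT ↦ ?_
  obtain ⟨-, hT⟩ := mem_powersetCard.1 hT
  rw [← expect_powersetCard_sdiff hT, ← expect_add_distrib]
  refine le_expect (powersetCard_nonempty.2 (hT ▸ Nat.le_add_right a b)) fun R hR ↦ ?_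
  simpa only [union_sdiff_of_subset (mem_powersetCard.1 hR).1] using
    fold_max_zero_union_le w R (T \ R)

theorem expectMax_le_div_add_one_mul {j k : ℕ} (hk : 0 < k) (hks : k ≤ #s) (hjs : j ≤ #s) :
    expectMax w s j ≤ (j / k + 1) * expectMax w s k := by
  induction j using Nat.strong_induction_on with
  | _ j ih =>
    rcases le_or_gt j k with hjk | hkj
    · have : (1 : ℝ) ≤ j / k + 1 := le_add_of_nonneg_left (by positivity)
      exact (expectMax_mono hjk hks).trans (le_mul_of_one_le_left (expectMax_nonneg k) this)
    · obtain ⟨i, rfl⟩ := Nat.exists_eq_add_of_le hkj.le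
      have hi := ih i (by omega) (by omega)
      calc expectMax w s (k + i) ≤ expectMax w s k + expectMax w s i := expectMax_add_le hjs
        _ ≤ expectMax w s k + (i / k + 1) * expectMax w s k := by gcongr
        _ = ((k + i : ℕ) / k + 1) * expectMax w s k := by
          push_cast
          field_simp
          ring

end ExpectMax

theorem eta_eq_expectMax (n : ℕ) (w : Fin n → ℝ) (a : ℝ) :
    eta n w a = expectMax w univ ⌊a⌋₊ := by
  unfold eta
  split_ifs with ha
  · simp [Nat.floor_eq_zero.2 ha, expectMax]
  · rw [Int.floor_toNat, expectMax, expect_eq_sum_div_card]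

theorem statement4_general (n : ℕ) (w : Fin n → ℝ)
    (m : ℕ) (p : ℝ) (hp0 : 0 ≤ p) (hp1 : p ≤ 1)
    (hmp : 1 ≤ m * p) (hmn : m ≤ n) :
    ∑ j ∈ Finset.range (m + 1),
        (m.choose j : ℝ) * p ^ j * (1 - p) ^ (m - j) * eta n w j ≤
      3 * eta n w (m * p) := by
  set k := ⌊(m : ℝ) * p⌋₊
  have hk : 1 ≤ k := (Nat.one_le_floor_iff _).2 hmp
  have hkm : k ≤ m := Nat.floor_le_of_le (mul_le_of_le_one_right m.cast_nonneg hp1)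
  have hmpk : (m : ℝ) * p / k ≤ 2 := by
    have hlt := Nat.lt_floor_add_one ((m : ℝ) * p)
    have hk' : (1 : ℝ) ≤ k := by exact_mod_cast hk
    rw [div_le_iff₀ (by positivity)]
    linarith
  simp only [eta_eq_expectMax, Nat.floor_natCast]
  calc ∑ j ∈ range (m + 1), (m.choose j : ℝ) * p ^ j * (1 - p) ^ (m - j) * expectMax w univ j
      ≤ ∑ j ∈ range (m + 1),
          (m.choose j : ℝ) * p ^ j * (1 - p) ^ (m - j) * ((j / k + 1) * expectMax w univ k) := by
        refine sum_le_sum fun j hj ↦ mul_le_mul_of_nonneg_left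
          (expectMax_le_div_add_one_mul hk ?_ ?_) (by positivity)
        all_goals simp only [card_univ, Fintype.card_fin, mem_range] at hj ⊢; omega
    _ = ((∑ j ∈ range (m + 1), (j : ℝ) * ((m.choose j : ℝ) * p ^ j * (1 - p) ^ (m - j))) / k
          + ∑ j ∈ range (m + 1), (m.choose j : ℝ) * p ^ j * (1 - p) ^ (m - j))
          * expectMax w univ k := by
        rw [sum_div, ← sum_add_distrib, sum_mul]
        exact sum_congr rfl fun j _ ↦ by ring
    _ = ((m : ℝ) * p / k + 1) * expectMax w univ k := by
        rw [sum_mul_choose_mul_pow_mul_pow, sum_choose_mul_pow_mul_pow]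
    _ ≤ 3 * expectMax w univ k := by
        gcongr
        · exact expectMax_nonneg k
        · linarith

theorem statement4 (n : ℕ) (w : Fin n → ℝ) (hw : ∀ i, 0 ≤ w i)
    (m : ℕ) (p : ℝ) (hp0 : 0 ≤ p) (hp1 : p ≤ 1)
    (hmp : 1 ≤ m * p) (hmn : m ≤ n) :
    ∑ j ∈ Finset.range (m + 1),
        (m.choose j : ℝ) * p ^ j * (1 - p) ^ (m - j) * eta n w j ≤
      3 * eta n w (m * p) :=
  statement4_general n w m p hp0 hp1 hmp hmn
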